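/- arXiv:1005.2040 — 9 statements merged into one kernel-verified Lean document; each statement's English description precedes it below -/
import Mathlib

section
/- Brezis–Browder ordering principle: Let M be a nonempty set equipped with a quasi-order ≤ (a reflexive and transitive relation) and let ψ : M → [0,∞) be a function. Assume (i) (M,≤) is sequentially inductive, i.e. every ≤-ascending sequence (x_n) (meaning x_n ≤ x_m whenever n ≤ m) has an upper bound in M modulo ≤, and (ii) ψ is ≤-decreasing, i.e. x ≤ y implies ψ(x) ≥ ψ(y). Then for each u ∈ M there exists v ∈ M with u ≤ v such that v is (≤,ψ)-maximal, i.e. for all w ∈ M, v ≤ w implies ψ(v) = ψ(w). -/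
/-!
Let `β x` be the infimum of `ψ` over the upper set of `x`. Starting from `u`, choose each next
term `x (n+1) ≥ x n` with `ψ (x (n+1)) < β (x n) + 1/(n+1)`, and let `v` bound this ascending
sequence. For `w ≥ v` we have `w ≥ x n` for all `n`, hence
`ψ v ≤ ψ (x (n+1)) < β (x n) + 1/(n+1) ≤ ψ w + 1/(n+1)`, while `ψ w ≤ ψ v` since `ψ` is
decreasing. So `ψ v = ψ w`.
-/

open Set

section Preorder

variable {α : Type*} [Preorder α] {ψ : α → ℝ}

noncomputable def infAbove (ψ : α → ℝ) (x : α) : ℝ :=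
  ⨅ y : Ici x, ψ y

theorem infAbove_le (hψ : BddBelow (range ψ)) {x y : α} (hxy : x ≤ y) :
    infAbove ψ x ≤ ψ y :=
  ciInf_le (f := fun y : Ici x => ψ y) (hψ.mono (range_comp_subset_range _ ψ)) ⟨y, hxy⟩

theorem exists_le_lt_infAbove_add (x : α) {ε : ℝ} (hε : 0 < ε) :
    ∃ y, x ≤ y ∧ ψ y < infAbove ψ x + ε := by
  have : Nonempty (Ici x) := ⟨⟨x, le_rfl⟩⟩
  obtain ⟨⟨y, hxy⟩, hy⟩ := exists_lt_of_ciInf_lt (lt_add_of_pos_right (infAbove ψ x) hε)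
  exact ⟨y, hxy, hy⟩

theorem eq_of_le_of_forall_le_lt_infAbove_add (hψ : BddBelow (range ψ)) (hdec : Antitone ψ)
    {s : ℕ → α} (hs : ∀ n, ψ (s (n + 1)) < infAbove ψ (s n) + 1 / (n + 1))
    {v : α} (hv : ∀ n, s n ≤ v) {w : α} (hvw : v ≤ w) : ψ v = ψ w := by
  refine le_antisymm (le_of_forall_pos_lt_add fun ε hε => ?_) (hdec hvw)
  obtain ⟨n, hn⟩ := exists_nat_one_div_lt hε
  calc ψ v ≤ ψ (s (n + 1)) := hdec (hv (n + 1))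
    _ < infAbove ψ (s n) + 1 / (n + 1) := hs n
    _ ≤ ψ w + 1 / (n + 1) := by gcongr; exact infAbove_le hψ ((hv n).trans hvw)
    _ < ψ w + ε := by gcongr

theorem exists_le_forall_le_imp_eq (hψ : BddBelow (range ψ)) (hdec : Antitone ψ)
    (hind : ∀ s : ℕ → α, Monotone s → ∃ v, ∀ n, s n ≤ v) (u : α) :
    ∃ v, u ≤ v ∧ ∀ w, v ≤ w → ψ v = ψ w := by
  choose next le_next next_lt using fun (n : ℕ) (x : α) =>
    exists_le_lt_infAbove_add (ψ := ψ) x (Nat.one_div_pos_of_nat (n := n))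
  let s : ℕ → α := fun n => Nat.rec (motive := fun _ => α) u next n
  obtain ⟨v, hv⟩ := hind s (monotone_nat_of_le_succ fun n => le_next n (s n))
  exact ⟨v, hv 0, fun w => eq_of_le_of_forall_le_lt_infAbove_add hψ hdec
    (fun n => next_lt n (s n)) hv⟩

end Preorder

theorem brezis_browder_principle_general {M : Type*}
    (le : M → M → Prop)
    (hrefl : ∀ x, le x x)
    (htrans : ∀ x y z, le x y → le y z → le x z)
    (ψ : M → ℝ) (hψ0 : ∀ x, 0 ≤ ψ x)
    (hind : ∀ x : ℕ → M, (∀ n m : ℕ, n ≤ m → le (x n) (x m)) →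
      ∃ b : M, ∀ n : ℕ, le (x n) b)
    (hdec : ∀ x y, le x y → ψ y ≤ ψ x) :
    ∀ u : M, ∃ v : M, le u v ∧ ∀ w : M, le v w → ψ v = ψ w := by
  let _ : Preorder M := { le := le, le_refl := hrefl, le_trans := htrans }
  have hψ : BddBelow (range ψ) := ⟨0, by rintro _ ⟨x, rfl⟩; exact hψ0 x⟩
  exact exists_le_forall_le_imp_eq hψ hdec hind

/-- Brezis–Browder ordering principle. -/
theorem brezis_browder_principle {M : Type*} [Nonempty M]
    (le : M → M → Prop)
    (hrefl : ∀ x, le x x)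
    (htrans : ∀ x y z, le x y → le y z → le x z)
    (ψ : M → ℝ) (hψ0 : ∀ x, 0 ≤ ψ x)
    (hind : ∀ x : ℕ → M, (∀ n m : ℕ, n ≤ m → le (x n) (x m)) →
      ∃ b : M, ∀ n : ℕ, le (x n) b)
    (hdec : ∀ x y, le x y → ψ y ≤ ψ x) :
    ∀ u : M, ∃ v : M, le u v ∧ ∀ w : M, le v w → ψ v = ψ w :=
  brezis_browder_principle_general le hrefl htrans ψ hψ0 hind hdec
end

section
/- Relative Brezis–Browder principle: Let (Z,≤) be a quasi-ordered set, M a nonempty subset of Z, and φ : Z → ℝ ∪ {−∞,∞} a function (restricted to M). Assume (i) φ is ≤-decreasing on M (x,y ∈ M and x ≤ y imply φ(x) ≥ φ(y)); (ii) φ is inf-proper over M: inf φ(M) > −∞ and Dom(φ) := {x ∈ M : φ(x) < ∞} is nonempty; (iii) Dom(φ) is sequentially inductive in M: every ≤-ascending sequence contained in Dom(φ) is bounded above in M modulo ≤. Then for each u ∈ Dom(φ) there exists v ∈ Dom(φ) such that u ≤ v and, for every x ∈ M with v ≤ x, one has φ(v) = φ(x). -/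
/-!
Starting from `u`, choose `x (n+1) ≥ x n` in the domain whose value is within `1/(n+1)` of
the infimum of `φ` over `M ∩ Ici (x n)`; this infimum is finite because `φ` is bounded below.
An upper bound `v` of this ascending sequence works: for `z ≥ v` in `M`, monotonicity gives
`φ z ≤ φ v ≤ φ (x (n+1)) ≤ φ z + 1/(n+1)` for every `n`.
-/

open Set

namespace EReal

lemma le_of_forall_pos_le_add {a b : EReal} (h : ∀ ε : ℝ, 0 < ε → a ≤ b + ε) : a ≤ b := by
  induction b using EReal.rec with
  | bot => simpa using h 1 one_pos
  | coe r =>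
    refine le_of_forall_lt_iff_le.1 fun z hz => ?_
    have := h (z - r) (_root_.sub_pos.2 (EReal.coe_lt_coe_iff.1 hz))
    rwa [← coe_add, add_sub_cancel] at this
  | top => exact le_top

lemma exists_mem_forall_le_add {β : Type*} {s : Set β} {f : β → EReal}
    (hbot : ⊥ < sInf (f '' s)) (htop : sInf (f '' s) < ⊤) {ε : ℝ} (hε : 0 < ε) :
    ∃ y ∈ s, ∀ z ∈ s, f y ≤ f z + ε := by
  lift sInf (f '' s) to ℝ using ⟨htop.ne, hbot.ne'⟩ with r hr
  have hlt : sInf (f '' s) < (r + ε : ℝ) := by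
    rw [← hr]; exact EReal.coe_lt_coe_iff.2 (lt_add_of_pos_right r hε)
  obtain ⟨_, ⟨y, hy, rfl⟩, hyr⟩ := sInf_lt_iff.1 hlt
  refine ⟨y, hy, fun z hz => ?_⟩
  calc f y ≤ (r + ε : ℝ) := hyr.le
    _ = r + ε := coe_add r ε
    _ ≤ f z + ε := by gcongr; exact hr ▸ sInf_le (mem_image_of_mem f hz)

end EReal

section BrezisBrowder

variable {α : Type*} [Preorder α] {M : Set α} {φ : α → EReal}

lemma exists_ge_almost_minimizing (hinf : ⊥ < sInf (φ '' M)) {x : α} (hx : x ∈ M)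
    (hφx : φ x < ⊤) {ε : ℝ} (hε : 0 < ε) : ∃ y ∈ M, x ≤ y ∧ ∀ z ∈ M, x ≤ z → φ y ≤ φ z + ε := by
  have hbot : ⊥ < sInf (φ '' (M ∩ Ici x)) :=
    hinf.trans_le (sInf_le_sInf (image_mono inter_subset_left))
  have htop : sInf (φ '' (M ∩ Ici x)) < ⊤ :=
    (sInf_le (mem_image_of_mem φ (⟨hx, le_rfl⟩ : x ∈ M ∩ Ici x))).trans_lt hφx
  obtain ⟨y, ⟨hyM, hxy⟩, hy⟩ := EReal.exists_mem_forall_le_add hbot htop hε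
  exact ⟨y, hyM, hxy, fun z hzM hxz => hy z ⟨hzM, hxz⟩⟩

lemma exists_monotone_almost_minimizing_seq (hinf : ⊥ < sInf (φ '' M)) {u : α}
    (hu : u ∈ {x ∈ M | φ x < ⊤}) :
    ∃ x : ℕ → α, x 0 = u ∧ Monotone x ∧ (∀ n, x n ∈ {x ∈ M | φ x < ⊤}) ∧
      ∀ n, ∀ z ∈ M, x n ≤ z → φ (x (n + 1)) ≤ φ z + (1 / (n + 1) : ℝ) := by
  have step : ∀ n : ℕ, ∀ x ∈ {x ∈ M | φ x < ⊤}, ∃ y ∈ {x ∈ M | φ x < ⊤}, x ≤ y ∧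
      ∀ z ∈ M, x ≤ z → φ y ≤ φ z + (1 / (n + 1) : ℝ) := by
    rintro n x ⟨hxM, hφx⟩
    obtain ⟨y, hyM, hxy, hy⟩ :=
      exists_ge_almost_minimizing hinf hxM hφx (ε := 1 / (n + 1)) (by positivity)
    refine ⟨y, ⟨hyM, ?_⟩, hxy, hy⟩
    exact (hy x hxM le_rfl).trans_lt (EReal.add_lt_top hφx.ne (EReal.coe_ne_top _))
  choose! g hgD hg_le hg using step
  let x : ℕ → α := fun n => Nat.rec u g n
  have hxD : ∀ n, x n ∈ {x ∈ M | φ x < ⊤} := fun n => by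
    induction n with
    | zero => exact hu
    | succ n ih => exact hgD n (x n) ih
  exact ⟨x, rfl, monotone_nat_of_le_succ fun n => hg_le n _ (hxD n), hxD,
    fun n => hg n _ (hxD n)⟩

theorem AntitoneOn.brezis_browder (hφ : AntitoneOn φ M) (hinf : ⊥ < sInf (φ '' M))
    (hind : ∀ x : ℕ → α, (∀ n : ℕ, x n ∈ {x ∈ M | φ x < ⊤}) → Monotone x →
      ∃ b ∈ M, ∀ n : ℕ, x n ≤ b)
    {u : α} (hu : u ∈ {x ∈ M | φ x < ⊤}) :
    ∃ v ∈ {x ∈ M | φ x < ⊤}, u ≤ v ∧ ∀ x ∈ M, v ≤ x → φ v = φ x := by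
  obtain ⟨x, rfl, hmono, hxD, hx⟩ := exists_monotone_almost_minimizing_seq hinf hu
  obtain ⟨b, hbM, hb⟩ := hind x hxD hmono
  have hφb : ∀ n, φ b ≤ φ (x n) := fun n => hφ (hxD n).1 hbM (hb n)
  refine ⟨b, ⟨hbM, (hφb 0).trans_lt (hxD 0).2⟩, hb 0, fun z hzM hbz => ?_⟩
  refine le_antisymm (EReal.le_of_forall_pos_le_add fun ε hε => ?_) (hφ hbM hzM hbz)
  obtain ⟨n, hn⟩ := exists_nat_one_div_lt hε
  calc φ b ≤ φ (x (n + 1)) := hφb (n + 1)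
    _ ≤ φ z + (1 / (n + 1) : ℝ) := hx n z hzM ((hb n).trans hbz)
    _ ≤ φ z + ε := by gcongr

end BrezisBrowder

theorem relative_brezis_browder_principle_general {Z : Type*}
    (le : Z → Z → Prop)
    (hrefl : ∀ x, le x x)
    (htrans : ∀ x y z, le x y → le y z → le x z)
    (M : Set Z)
    (φ : Z → EReal)
    (hdec : ∀ x ∈ M, ∀ y ∈ M, le x y → φ y ≤ φ x)
    (hinf : ⊥ < sInf (φ '' M))
    (hind : ∀ x : ℕ → Z, (∀ n : ℕ, x n ∈ {x ∈ M | φ x < ⊤}) →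
      (∀ n m : ℕ, n ≤ m → le (x n) (x m)) →
      ∃ b ∈ M, ∀ n : ℕ, le (x n) b) :
    ∀ u ∈ {x ∈ M | φ x < ⊤}, ∃ v ∈ {x ∈ M | φ x < ⊤},
      le u v ∧ ∀ x ∈ M, le v x → φ v = φ x := by
  let _ : Preorder Z := { le := le, le_refl := hrefl, le_trans := htrans }
  exact fun u hu => AntitoneOn.brezis_browder hdec hinf hind hu

/-- Relative Brezis–Browder principle. -/
theorem relative_brezis_browder_principle {Z : Type*}
    (le : Z → Z → Prop)
    (hrefl : ∀ x, le x x)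
    (htrans : ∀ x y z, le x y → le y z → le x z)
    (M : Set Z) (hM : M.Nonempty)
    (φ : Z → EReal)
    (hdec : ∀ x ∈ M, ∀ y ∈ M, le x y → φ y ≤ φ x)
    (hinf : ⊥ < sInf (φ '' M))
    (hdom : {x ∈ M | φ x < ⊤}.Nonempty)
    (hind : ∀ x : ℕ → Z, (∀ n : ℕ, x n ∈ {x ∈ M | φ x < ⊤}) →
      (∀ n m : ℕ, n ≤ m → le (x n) (x m)) →
      ∃ b ∈ M, ∀ n : ℕ, le (x n) b) :
    ∀ u ∈ {x ∈ M | φ x < ⊤}, ∃ v ∈ {x ∈ M | φ x < ⊤},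
      le u v ∧ ∀ x ∈ M, le v x → φ v = φ x :=
  relative_brezis_browder_principle_general le hrefl htrans M φ hdec hinf hind
end

section
/- Pseudometric maximality principle (Turinici): Let M be a nonempty set with a quasi-order ≤, and let e : M × M → [0,∞) be a semimetric, i.e. e is reflexive (e(x,x) = 0), triangular (e(x,z) ≤ e(x,y) + e(y,z)) and symmetric (e(x,y) = e(y,x)). Assume (i) (M,≤) is sequentially inductive (every ≤-ascending sequence has an upper bound modulo ≤) and (ii) (M,≤) is regular modulo e, i.e. every ≤-ascending sequence (x_n) is e-Cauchy: for each δ > 0 there exists n(δ) with e(x_p,x_q) ≤ δ whenever n(δ) ≤ p ≤ q. Then for each u ∈ M there exists v ∈ M with u ≤ v such that v is (≤,e)-maximal: for all w ∈ M, v ≤ w implies e(v,w) = 0. -/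
/-- Pseudometric maximality principle (Turinici). -/
theorem turinici_pseudometric_maximality {M : Type*} [Nonempty M]
    (le : M → M → Prop)
    (hrefl : ∀ x, le x x)
    (htrans : ∀ x y z, le x y → le y z → le x z)
    (e : M → M → ℝ)
    (hnonneg : ∀ x y, 0 ≤ e x y)
    (herefl : ∀ x, e x x = 0)
    (htri : ∀ x y z, e x z ≤ e x y + e y z)
    (hsymm : ∀ x y, e x y = e y x)
    (hind : ∀ x : ℕ → M, (∀ n m : ℕ, n ≤ m → le (x n) (x m)) →
      ∃ b : M, ∀ n : ℕ, le (x n) b)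
    (hreg : ∀ x : ℕ → M, (∀ n m : ℕ, n ≤ m → le (x n) (x m)) →
      ∀ δ : ℝ, 0 < δ → ∃ N : ℕ, ∀ p q : ℕ, N ≤ p → p ≤ q → e (x p) (x q) ≤ δ) :
    ∀ u : M, ∃ v : M, le u v ∧ ∀ w : M, le v w → e v w = 0 := by
  intro u
  by_contra hcon
  push_neg at hcon
  classical
  set T : M → ℝ := fun x => sSup ((fun w => min 1 (e x w)) '' {w | le x w}) with hT
  have hTmem : ∀ x w, le x w → min 1 (e x w) ≤ T x := by
    intro x w h
    apply le_csSup
    · exact ⟨1, by rintro _ ⟨w', hw', rfl⟩; exact min_le_left _ _⟩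
    · exact ⟨w, h, rfl⟩
  have hpick : ∀ x, ∃ y, le x y ∧ T x / 2 ≤ min 1 (e x y) := by
    intro x
    rcases le_or_gt (T x) 0 with h | h
    · refine ⟨x, hrefl x, ?_⟩
      rw [herefl x]
      simp; linarith
    · have hlt : T x / 2 < T x := by linarith
      have hne : ((fun w => min 1 (e x w)) '' {w | le x w}).Nonempty :=
        ⟨min 1 (e x x), x, hrefl x, rfl⟩
      obtain ⟨s, hs, hs2⟩ := exists_lt_of_lt_csSup hne hlt
      obtain ⟨y, hy, rfl⟩ := hs
      exact ⟨y, hy, hs2.le⟩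
  choose f hf1 hf2 using hpick
  set x : ℕ → M := fun n => f^[n] u with hx
  have hstep : ∀ n, x (n + 1) = f (x n) := fun n => Function.iterate_succ_apply' f n u
  have hasc : ∀ n m, n ≤ m → le (x n) (x m) := by
    intro n m h
    induction m with
    | zero =>
      have : n = 0 := Nat.le_zero.mp h
      subst this; exact hrefl _
    | succ m ih =>
      rcases Nat.lt_or_ge n (m + 1) with h' | h'
      · exact htrans _ _ _ (ih (Nat.lt_succ_iff.mp h')) (by rw [hstep]; exact hf1 _)
      · have : n = m + 1 := le_antisymm h h'
        subst this; exact hrefl _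
  obtain ⟨b, hb⟩ := hind x hasc
  have hub : le u b := hb 0
  obtain ⟨w, hbw, hew⟩ := hcon b hub
  have hewpos : 0 < e b w := lt_of_le_of_ne (hnonneg b w) (Ne.symm hew)
  set δ : ℝ := min (e b w / 8) (1 / 4) with hδ
  have hδpos : 0 < δ := lt_min (by linarith) (by norm_num)
  have hδ4 : δ ≤ 1 / 4 := min_le_right _ _
  have hδ8 : δ ≤ e b w / 8 := min_le_left _ _
  obtain ⟨N, hN⟩ := hreg x hasc δ hδpos
  have h1 : e (x N) (x (N + 1)) ≤ δ := hN N (N + 1) le_rfl (by omega)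
  have h2 : T (x N) ≤ 2 * δ := by
    have hf2' := hf2 (x N)
    rw [← hstep] at hf2'
    have hm : min 1 (e (x N) (x (N + 1))) ≤ δ := le_trans (min_le_right _ _) h1
    linarith
  have key : ∀ w', le (x N) w' → e (x N) w' ≤ 2 * δ := by
    intro w' hw'
    have hmle : min 1 (e (x N) w') ≤ 2 * δ := (hTmem (x N) w' hw').trans h2
    rcases le_or_gt (e (x N) w') 1 with h' | h'
    · rwa [min_eq_right h'] at hmle
    · rw [min_eq_left h'.le] at hmle; linarith
  have hxb : e (x N) b ≤ 2 * δ := key b (hb N)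
  have hxw : e (x N) w ≤ 2 * δ := key w (htrans _ _ _ (hb N) hbw)
  have htri' := htri b (x N) w
  rw [hsymm b (x N)] at htri'
  linarith
end

section
/- Let M be a nonempty set with a quasi-order ≤ and a semimetric e : M × M → [0,∞) (reflexive, triangular, symmetric). Then the following global conditions are equivalent: (i) every ≤-ascending sequence in M is e-Cauchy; (ii) every ≤-ascending sequence (x_n) in M is e-asymptotic, meaning e(x_n, x_{n+1}) → 0 as n → ∞. -/
/-! If the ascending sequence `x` is not Cauchy, pick pairs `p₀ ≤ q₀ < p₁ ≤ q₁ < ⋯` with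
`e (x pₖ) (x qₖ) > δ`. The subsequence `x p₀, x q₀, x p₁, x q₁, …` is again ascending, and its
consecutive terms at even positions stay `δ` apart, so it is not asymptotic. -/

open Filter Topology

def interleave {α : Type*} (a b : ℕ → α) (n : ℕ) : α :=
  if n % 2 = 0 then a (n / 2) else b (n / 2)

section Interleave

variable {α : Type*} (a b : ℕ → α)

@[simp]
theorem interleave_two_mul (k : ℕ) : interleave a b (2 * k) = a k := by
  simp [interleave]

@[simp]
theorem interleave_two_mul_add_one (k : ℕ) : interleave a b (2 * k + 1) = b k := by
  simp [interleave, Nat.add_mod, Nat.add_div]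

theorem monotone_interleave [Preorder α] {a b : ℕ → α} (hab : ∀ k, a k ≤ b k)
    (hba : ∀ k, b k ≤ a (k + 1)) : Monotone (interleave a b) := by
  refine monotone_nat_of_le_succ fun n => ?_
  obtain ⟨k, rfl | rfl⟩ := Nat.even_or_odd' n
  · simpa using hab k
  · simpa [show 2 * k + 1 + 1 = 2 * (k + 1) by ring] using hba k

end Interleave

theorem exists_chain_of_frequently {P : ℕ → ℕ → Prop}
    (h : ∀ N, ∃ p q, N ≤ p ∧ p ≤ q ∧ P p q) :
    ∃ a b : ℕ → ℕ, (∀ k, a k ≤ b k) ∧ (∀ k, b k ≤ a (k + 1)) ∧ ∀ k, P (a k) (b k) := by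
  choose p q hNp hpq hP using h
  set start : ℕ → ℕ := fun k => (fun N => q N + 1)^[k] 0
  refine ⟨p ∘ start, q ∘ start, fun k => hpq _, fun k => ?_, fun k => hP _⟩
  have hstart_succ : start (k + 1) = q (start k) + 1 := Function.iterate_succ_apply' _ _ _
  have hstart_le := hNp (start (k + 1))
  show q (start k) ≤ p (start (k + 1))
  omega

theorem exists_monotone_not_tendsto_of_frequently {f : ℕ → ℕ → ℝ} {δ : ℝ} (hδ : 0 < δ)
    (h : ∀ N, ∃ p q, N ≤ p ∧ p ≤ q ∧ δ < f p q) :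
    ∃ g : ℕ → ℕ, Monotone g ∧ ¬Tendsto (fun n => f (g n) (g (n + 1))) atTop (𝓝 0) := by
  obtain ⟨a, b, hab, hba, hfar⟩ := exists_chain_of_frequently h
  refine ⟨interleave a b, monotone_interleave hab hba, fun hlim => ?_⟩
  obtain ⟨N, hN⟩ := eventually_atTop.1 ((tendsto_order.1 hlim).2 δ hδ)
  have hnear := hN (2 * N) (by omega)
  simp only [interleave_two_mul, interleave_two_mul_add_one] at hnear
  exact (hfar N).not_gt hnear

theorem tendsto_consecutive_of_cauchy {M : Type*} {e : M → M → ℝ} (hnonneg : ∀ x y, 0 ≤ e x y)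
    {x : ℕ → M}
    (hx : ∀ δ : ℝ, 0 < δ → ∃ N : ℕ, ∀ p q : ℕ, N ≤ p → p ≤ q → e (x p) (x q) ≤ δ) :
    Tendsto (fun n => e (x n) (x (n + 1))) atTop (𝓝 0) := by
  refine tendsto_order.2 ⟨fun a ha => .of_forall fun n => ha.trans_le (hnonneg _ _),
    fun a ha => ?_⟩
  obtain ⟨N, hN⟩ := hx (a / 2) (half_pos ha)
  exact eventually_atTop.2 ⟨N, fun n hn => (hN n (n + 1) hn n.le_succ).trans_lt (half_lt_self ha)⟩

theorem eCauchy_iff_eAsymptotic_global_general {M : Type*}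
    (le : M → M → Prop)
    (e : M → M → ℝ)
    (hnonneg : ∀ x y, 0 ≤ e x y) :
    (∀ x : ℕ → M, (∀ n m : ℕ, n ≤ m → le (x n) (x m)) →
      ∀ δ : ℝ, 0 < δ → ∃ N : ℕ, ∀ p q : ℕ, N ≤ p → p ≤ q → e (x p) (x q) ≤ δ)
    ↔
    (∀ x : ℕ → M, (∀ n m : ℕ, n ≤ m → le (x n) (x m)) →
      Filter.Tendsto (fun n => e (x n) (x (n + 1))) Filter.atTop (nhds 0)) := by
  refine ⟨fun hcauchy x hx => tendsto_consecutive_of_cauchy hnonneg (hcauchy x hx),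
    fun hasymp x hx δ hδ => ?_⟩
  by_contra! hfar
  obtain ⟨g, hg, hnot⟩ :=
    exists_monotone_not_tendsto_of_frequently (f := fun p q => e (x p) (x q)) hδ hfar
  exact hnot (hasymp (x ∘ g) fun n m hnm => hx _ _ (hg hnm))

/-- Equivalence of the global Cauchy and asymptotic conditions for
ascending sequences with respect to a semimetric. -/
theorem eCauchy_iff_eAsymptotic_global {M : Type*} [Nonempty M]
    (le : M → M → Prop)
    (hrefl : ∀ x, le x x)
    (htrans : ∀ x y z, le x y → le y z → le x z)
    (e : M → M → ℝ)
    (hnonneg : ∀ x y, 0 ≤ e x y)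
    (herefl : ∀ x, e x x = 0)
    (htri : ∀ x y z, e x z ≤ e x y + e y z)
    (hsymm : ∀ x y, e x y = e y x) :
    (∀ x : ℕ → M, (∀ n m : ℕ, n ≤ m → le (x n) (x m)) →
      ∀ δ : ℝ, 0 < δ → ∃ N : ℕ, ∀ p q : ℕ, N ≤ p → p ≤ q → e (x p) (x q) ≤ δ)
    ↔
    (∀ x : ℕ → M, (∀ n m : ℕ, n ≤ m → le (x n) (x m)) →
      Filter.Tendsto (fun n => e (x n) (x (n + 1))) Filter.atTop (nhds 0)) :=
  eCauchy_iff_eAsymptotic_global_general le e hnonneg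
end

section
/- Let Y be a real vector space, L ⊆ Y a non-degenerate proper convex cone, Λ : [0,∞) → L normal modulo L, and γ the gauge function attached to (L,Λ). Then γ is super-additive: γ(y₁ + y₂) ≥ γ(y₁) + γ(y₂) for all y₁, y₂ ∈ Y for which the right-hand side exists in the extended reals (i.e. {γ(y₁), γ(y₂)} ≠ {−∞, ∞}). -/
/-! If `Λ s ≤_L y₁` and `Λ t ≤_L y₂`, then subadditivity of `Λ` gives
`Λ (s + t) ≤_L Λ s + Λ t ≤_L y₁ + y₂`, so `s + t` is admissible for `y₁ + y₂`;
taking suprema over `s` and `t` gives the inequality. -/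

/-- The gauge function attached to `(L, Λ)`. -/
noncomputable def conicalGauge {Y : Type*} [AddCommGroup Y] [Module ℝ Y]
    (L : Set Y) (Λ : ℝ → Y) (y : Y) : EReal :=
  sSup ((fun s : ℝ => (s : EReal)) '' {s : ℝ | 0 ≤ s ∧ y - Λ s ∈ L})

section

variable {Y : Type*} [AddCommGroup Y] [Module ℝ Y] {L : Set Y} {Λ : ℝ → Y}

theorem coe_le_conicalGauge {y : Y} {s : ℝ} (hs : 0 ≤ s) (hy : y - Λ s ∈ L) :
    (s : EReal) ≤ conicalGauge L Λ y :=
  le_sSup ⟨s, ⟨hs, hy⟩, rfl⟩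

theorem exists_lt_of_lt_conicalGauge {y : Y} {a : EReal} (ha : a < conicalGauge L Λ y) :
    ∃ s : ℝ, 0 ≤ s ∧ y - Λ s ∈ L ∧ a < s := by
  obtain ⟨_, ⟨s, ⟨hs, hy⟩, rfl⟩, has⟩ := lt_sSup_iff.1 ha
  exact ⟨s, hs, hy, has⟩

theorem conicalGauge_add_le_of_add_mem (hadd : ∀ x ∈ L, ∀ y ∈ L, x + y ∈ L)
    (hsub : ∀ t₁ t₂ : ℝ, 0 ≤ t₁ → 0 ≤ t₂ → (Λ t₁ + Λ t₂) - Λ (t₁ + t₂) ∈ L) (y₁ y₂ : Y) :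
    conicalGauge L Λ y₁ + conicalGauge L Λ y₂ ≤ conicalGauge L Λ (y₁ + y₂) := by
  refine EReal.add_le_of_forall_lt fun a ha b hb => ?_
  obtain ⟨s, hs, hs₁, has⟩ := exists_lt_of_lt_conicalGauge ha
  obtain ⟨t, ht, ht₂, hbt⟩ := exists_lt_of_lt_conicalGauge hb
  have hst : (y₁ + y₂) - Λ (s + t) ∈ L := by
    have h := hadd _ (hadd _ hs₁ _ ht₂) _ (hsub s t hs ht)
    rwa [show y₁ - Λ s + (y₂ - Λ t) + (Λ s + Λ t - Λ (s + t)) = y₁ + y₂ - Λ (s + t) by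
      abel] at h
  calc a + b ≤ (s : EReal) + t := add_le_add has.le hbt.le
    _ = ((s + t : ℝ) : EReal) := by norm_cast
    _ ≤ conicalGauge L Λ (y₁ + y₂) := coe_le_conicalGauge (add_nonneg hs ht) hst

end

theorem gauge_superadditive_general {Y : Type*} [AddCommGroup Y] [Module ℝ Y]
    (L : Set Y)
    (hcone : ∀ a b : ℝ, 0 ≤ a → 0 ≤ b → ∀ x ∈ L, ∀ y ∈ L, a • x + b • y ∈ L)
    (Λ : ℝ → Y)
    (hsub : ∀ t₁ t₂ : ℝ, 0 ≤ t₁ → 0 ≤ t₂ → (Λ t₁ + Λ t₂) - Λ (t₁ + t₂) ∈ L) :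
    ∀ y₁ y₂ : Y,
      ¬((conicalGauge L Λ y₁ = ⊥ ∧ conicalGauge L Λ y₂ = ⊤) ∨
        (conicalGauge L Λ y₁ = ⊤ ∧ conicalGauge L Λ y₂ = ⊥)) →
      conicalGauge L Λ y₁ + conicalGauge L Λ y₂ ≤ conicalGauge L Λ (y₁ + y₂) := by
  intro y₁ y₂ _
  refine conicalGauge_add_le_of_add_mem (fun x hx y hy => ?_) hsub y₁ y₂
  simpa using hcone 1 1 zero_le_one zero_le_one x hx y hy

/-- The gauge function is super-additive (whenever the right-hand side exists
in the extended reals). -/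
theorem gauge_superadditive {Y : Type*} [AddCommGroup Y] [Module ℝ Y]
    (L : Set Y)
    (hcone : ∀ a b : ℝ, 0 ≤ a → 0 ≤ b → ∀ x ∈ L, ∀ y ∈ L, a • x + b • y ∈ L)
    (hnd : L ≠ {0}) (hproper : L ≠ Set.univ)
    (Λ : ℝ → Y) (hmem : ∀ t : ℝ, 0 ≤ t → Λ t ∈ L)
    (h0 : Λ 0 = 0)
    (hstrict : ∀ t τ : ℝ, 0 ≤ t → t < τ → Λ τ - Λ t ∈ L \ (-L))
    (hsub : ∀ t₁ t₂ : ℝ, 0 ≤ t₁ → 0 ≤ t₂ → (Λ t₁ + Λ t₂) - Λ (t₁ + t₂) ∈ L) :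
    ∀ y₁ y₂ : Y,
      ¬((conicalGauge L Λ y₁ = ⊥ ∧ conicalGauge L Λ y₂ = ⊤) ∨
        (conicalGauge L Λ y₁ = ⊤ ∧ conicalGauge L Λ y₂ = ⊥)) →
      conicalGauge L Λ y₁ + conicalGauge L Λ y₂ ≤ conicalGauge L Λ (y₁ + y₂) :=
  gauge_superadditive_general L hcone Λ hsub
end

section
/- Let Y be a real vector space, L ⊆ Y a non-degenerate proper convex cone, Λ : [0,∞) → L normal modulo L, and γ the gauge function attached to (L,Λ). Then γ is subtractive: for all y₁, y₂ ∈ Y, if γ(y₂) is finite (so 0 ≤ γ(y₂) < ∞), then γ(y₁ − y₂) ≤ γ(y₁) − γ(y₂) in the extended reals. -/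
section conicalGauge

variable {Y : Type*} [AddCommGroup Y] [Module ℝ Y] {L : Set Y} {Λ : ℝ → Y}

theorem conicalGauge_le {y : Y} {e : EReal}
    (h : ∀ s : ℝ, 0 ≤ s → y - Λ s ∈ L → (s : EReal) ≤ e) : conicalGauge L Λ y ≤ e :=
  sSup_le <| by
    rintro _ ⟨s, ⟨hs, hy⟩, rfl⟩
    exact h s hs hy

theorem conicalGauge_add_coe_le (hadd : ∀ x ∈ L, ∀ y ∈ L, x + y ∈ L)
    (hsub : ∀ t₁ t₂ : ℝ, 0 ≤ t₁ → 0 ≤ t₂ → (Λ t₁ + Λ t₂) - Λ (t₁ + t₂) ∈ L)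
    (y : Y) {z : Y} {s : ℝ} (hs : 0 ≤ s) (hz : z - Λ s ∈ L) :
    conicalGauge L Λ y + s ≤ conicalGauge L Λ (y + z) := by
  have hs_bot : (s : EReal) ≠ ⊥ ∨ conicalGauge L Λ (y + z) ≠ ⊥ := .inl (EReal.coe_ne_bot s)
  have hs_top : (s : EReal) ≠ ⊤ ∨ conicalGauge L Λ (y + z) ≠ ⊤ := .inl (EReal.coe_ne_top s)
  rw [← EReal.le_sub_iff_add_le hs_bot hs_top]
  refine conicalGauge_le fun b hb hy => ?_
  rw [EReal.le_sub_iff_add_le hs_bot hs_top, ← EReal.coe_add]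
  refine coe_le_conicalGauge (add_nonneg hb hs) ?_
  have hsplit : y + z - Λ (b + s) = (y - Λ b + (z - Λ s)) + (Λ b + Λ s - Λ (b + s)) := by abel
  rw [hsplit]
  exact hadd _ (hadd _ hy _ hz) _ (hsub b s hb hs)

end conicalGauge

theorem gauge_subtractive_general {Y : Type*} [AddCommGroup Y] [Module ℝ Y]
    (L : Set Y)
    (hcone : ∀ a b : ℝ, 0 ≤ a → 0 ≤ b → ∀ x ∈ L, ∀ y ∈ L, a • x + b • y ∈ L)
    (Λ : ℝ → Y)
    (hsub : ∀ t₁ t₂ : ℝ, 0 ≤ t₁ → 0 ≤ t₂ → (Λ t₁ + Λ t₂) - Λ (t₁ + t₂) ∈ L) :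
    ∀ y₁ y₂ : Y, conicalGauge L Λ y₂ ≠ ⊥ → conicalGauge L Λ y₂ ≠ ⊤ →
      conicalGauge L Λ (y₁ - y₂) ≤ conicalGauge L Λ y₁ - conicalGauge L Λ y₂ := by
  intro y₁ y₂ hbot htop
  have hadd : ∀ x ∈ L, ∀ y ∈ L, x + y ∈ L := fun x hx y hy => by
    simpa using hcone 1 1 zero_le_one zero_le_one x hx y hy
  refine conicalGauge_le fun s hs hy => ?_
  rw [EReal.le_sub_iff_add_le (.inl hbot) (.inl htop), add_comm]
  simpa only [add_sub_cancel] using conicalGauge_add_coe_le hadd hsub y₂ hs hy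

/-- The gauge function is subtractive: `γ(y₁ − y₂) ≤ γ(y₁) − γ(y₂)`
whenever `γ(y₂)` is finite. -/
theorem gauge_subtractive {Y : Type*} [AddCommGroup Y] [Module ℝ Y]
    (L : Set Y)
    (hcone : ∀ a b : ℝ, 0 ≤ a → 0 ≤ b → ∀ x ∈ L, ∀ y ∈ L, a • x + b • y ∈ L)
    (hnd : L ≠ {0}) (hproper : L ≠ Set.univ)
    (Λ : ℝ → Y) (hmem : ∀ t : ℝ, 0 ≤ t → Λ t ∈ L)
    (h0 : Λ 0 = 0)
    (hstrict : ∀ t τ : ℝ, 0 ≤ t → t < τ → Λ τ - Λ t ∈ L \ (-L))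
    (hsub : ∀ t₁ t₂ : ℝ, 0 ≤ t₁ → 0 ≤ t₂ → (Λ t₁ + Λ t₂) - Λ (t₁ + t₂) ∈ L) :
    ∀ y₁ y₂ : Y, conicalGauge L Λ y₂ ≠ ⊥ → conicalGauge L Λ y₂ ≠ ⊤ →
      conicalGauge L Λ (y₁ - y₂) ≤ conicalGauge L Λ y₁ - conicalGauge L Λ y₂ :=
  gauge_subtractive_general L hcone Λ hsub
end

section
/- Cauchy lemma (Lemma 4.1): Let Y be a real vector space, K ⊆ Y a convex cone, H ⊆ Y a convex cone with K ⊆ H, and Λ : [0,∞) → K almost normal modulo (K,H): Λ(0) = 0, Λ(τ) − Λ(t) ∈ K \ (−H) whenever τ > t, and Λ(t₁ + t₂) ≤_K Λ(t₁) + Λ(t₂) for all t₁, t₂ ≥ 0. Let (X,d) be a metric space, A ⊆ X × Y nonempty, and assume (i) P_Y(A) is bounded below modulo H: there exists ỹ ∈ Y with y − ỹ ∈ H for all (x,y) ∈ A; (ii) H is Archimedean: h, v ∈ H and τh ≤_H v for all τ > 0 imply h ∈ H ∩ (−H). Then every sequence ((x_n, y_n)) in A satisfying Λ(d(x_n, x_m))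 ≤_K y_n − y_m whenever n ≤ m has (x_n) a d-Cauchy sequence in X. -/
/-!
If `x` is not Cauchy, there is `ε > 0` such that past every index the sequence still makes a jump
of length at least `ε`. Since `y` is `K`-descending with steps bounded below by `Λ`, every such
jump lowers `y` by at least `Λ ε` modulo `K`; iterating, `y 0 - k • Λ ε` dominates some `y m`,
hence the lower bound `ytilde`, modulo `H` for every `k`. The Archimedean property then puts
`Λ ε` in `-H`, contradicting `Λ ε - Λ 0 ∉ -H`.
-/

section Cones

variable {Y : Type*} [AddCommGroup Y] [Module ℝ Y]

def IsConvexCone (C : Set Y) : Prop :=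
  ∀ a b : ℝ, 0 ≤ a → 0 ≤ b → ∀ x ∈ C, ∀ y ∈ C, a • x + b • y ∈ C

def IsArchimedeanCone (H : Set Y) : Prop :=
  ∀ h v : Y, h ∈ H → v ∈ H → (∀ τ : ℝ, 0 < τ → v - τ • h ∈ H) → h ∈ H ∩ (-H)

theorem IsConvexCone.add_mem {C : Set Y} (hC : IsConvexCone C) {u v : Y} (hu : u ∈ C)
    (hv : v ∈ C) : u + v ∈ C := by
  simpa using hC 1 1 zero_le_one zero_le_one u hu v hv

theorem IsConvexCone.smul_mem {C : Set Y} (hC : IsConvexCone C) {a : ℝ} (ha : 0 ≤ a) {u : Y}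
    (hu : u ∈ C) : a • u ∈ C := by
  simpa using hC a 0 ha le_rfl u hu u hu

def IsConvexCone.toAddSubmonoid {C : Set Y} (hC : IsConvexCone C) (h0 : (0 : Y) ∈ C) :
    AddSubmonoid Y where
  carrier := C
  add_mem' := hC.add_mem
  zero_mem' := h0

theorem IsArchimedeanCone.mem_neg_of_forall_sub_nsmul_mem {H : Set Y} (hH : IsConvexCone H)
    (harch : IsArchimedeanCone H) {h v : Y} (hh : h ∈ H) (hv : v ∈ H)
    (hk : ∀ k : ℕ, v - k • h ∈ H) : h ∈ -H := by
  refine (harch h v hh hv fun τ _ => ?_).2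
  have hrest : ((⌈τ⌉₊ : ℝ) - τ) • h ∈ H := hH.smul_mem (sub_nonneg.2 (Nat.le_ceil τ)) hh
  convert hH.add_mem (hk ⌈τ⌉₊) hrest using 1
  rw [sub_smul, Nat.cast_smul_eq_nsmul]
  abel

end Cones

section Descent

variable {Y : Type*} [AddCommGroup Y] {K : AddSubmonoid Y}

theorem exists_sub_sub_nsmul_mem {α : Type*} {y : α → Y} {e : Y}
    (hstep : ∀ n, ∃ m, y n - y m - e ∈ K) (n : α) (k : ℕ) : ∃ m, y n - y m - k • e ∈ K := by
  induction k with
  | zero => exact ⟨n, by simp⟩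
  | succ k ih =>
    obtain ⟨m, hm⟩ := ih
    obtain ⟨m', hm'⟩ := hstep m
    refine ⟨m', ?_⟩
    convert K.add_mem hm hm' using 1
    rw [succ_nsmul]
    abel

theorem exists_sub_sub_mem_of_forall_exists_le_dist {X : Type*} [PseudoMetricSpace X]
    {Λ : ℝ → Y} {x : ℕ → X} {y : ℕ → Y} {ε : ℝ}
    (hΛmem : ∀ t : ℝ, 0 ≤ t → Λ t ∈ K)
    (hΛmono : ∀ t τ : ℝ, 0 ≤ t → t < τ → Λ τ - Λ t ∈ K)
    (hasc : ∀ n m : ℕ, n ≤ m → y n - y m - Λ (dist (x n) (x m)) ∈ K) (hε : 0 ≤ ε)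
    (hfar : ∀ N, ∃ m ≥ N, ∃ n ≥ N, ε ≤ dist (x m) (x n)) (N : ℕ) :
    ∃ m, y N - y m - Λ ε ∈ K := by
  obtain ⟨a, ha, b, hb, hab⟩ := hfar N
  wlog hle : a ≤ b generalizing a b
  · exact this b hb a ha (dist_comm (x a) (x b) ▸ hab) (le_of_not_ge hle)
  have hjump : Λ (dist (x a) (x b)) - Λ ε ∈ K := by
    rcases hab.lt_or_eq with hlt | heq
    · exact hΛmono ε _ hε hlt
    · simp [heq]
  refine ⟨b, ?_⟩
  convert K.add_mem (K.add_mem (K.add_mem (hasc N a ha) (hΛmem _ dist_nonneg))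
    (hasc a b hle)) hjump using 1
  abel

end Descent

theorem ascending_sequence_is_cauchy_general
    {Y : Type*} [AddCommGroup Y] [Module ℝ Y]
    (K H : Set Y)
    (hKcone : ∀ a b : ℝ, 0 ≤ a → 0 ≤ b → ∀ x ∈ K, ∀ y ∈ K, a • x + b • y ∈ K)
    (hHcone : ∀ a b : ℝ, 0 ≤ a → 0 ≤ b → ∀ x ∈ H, ∀ y ∈ H, a • x + b • y ∈ H)
    (hKH : K ⊆ H)
    (Λ : ℝ → Y) (hΛmem : ∀ t : ℝ, 0 ≤ t → Λ t ∈ K)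
    (hΛ0 : Λ 0 = 0)
    (hΛstrict : ∀ t τ : ℝ, 0 ≤ t → t < τ → Λ τ - Λ t ∈ K \ (-H))
    {X : Type*} [MetricSpace X]
    (A : Set (X × Y))
    (hbdd : ∃ ytilde : Y, ∀ p ∈ A, p.2 - ytilde ∈ H)
    (harch : ∀ h v : Y, h ∈ H → v ∈ H → (∀ τ : ℝ, 0 < τ → v - τ • h ∈ H) →
      h ∈ H ∩ (-H))
    (x : ℕ → X) (y : ℕ → Y)
    (hxyA : ∀ n : ℕ, (x n, y n) ∈ A)
    (hasc : ∀ n m : ℕ, n ≤ m → y n - y m - Λ (dist (x n) (x m)) ∈ K) :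
    CauchySeq x := by
  obtain ⟨ytilde, hyt⟩ := hbdd
  let Kₘ := IsConvexCone.toAddSubmonoid hKcone (by simpa [hΛ0] using hΛmem 0 le_rfl)
  rw [Metric.cauchySeq_iff]
  by_contra! hnc
  obtain ⟨ε, hε, hfar⟩ := hnc
  have hstep : ∀ n, ∃ m, y n - y m - Λ ε ∈ Kₘ :=
    exists_sub_sub_mem_of_forall_exists_le_dist (K := Kₘ) hΛmem
      (fun t τ ht hlt => (hΛstrict t τ ht hlt).1) hasc hε.le hfar
  have hΛε : Λ ε ∈ -H := by
    refine IsArchimedeanCone.mem_neg_of_forall_sub_nsmul_mem hHcone harch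
      (hKH (hΛmem ε hε.le)) (hyt _ (hxyA 0)) fun k => ?_
    obtain ⟨m, hm⟩ := exists_sub_sub_nsmul_mem hstep 0 k
    convert IsConvexCone.add_mem hHcone (hKH hm) (hyt _ (hxyA m)) using 1
    abel
  exact (hΛstrict 0 ε le_rfl hε).2 (by simpa [hΛ0] using hΛε)

/-- Cauchy lemma (Lemma 4.1): under boundedness below modulo the Archimedean
cone `H`, every `(⪰)`-ascending sequence in `A` has a `d`-Cauchy first
component. -/
theorem ascending_sequence_is_cauchy
    {Y : Type*} [AddCommGroup Y] [Module ℝ Y]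
    (K H : Set Y)
    (hKcone : ∀ a b : ℝ, 0 ≤ a → 0 ≤ b → ∀ x ∈ K, ∀ y ∈ K, a • x + b • y ∈ K)
    (hHcone : ∀ a b : ℝ, 0 ≤ a → 0 ≤ b → ∀ x ∈ H, ∀ y ∈ H, a • x + b • y ∈ H)
    (hKH : K ⊆ H)
    (Λ : ℝ → Y) (hΛmem : ∀ t : ℝ, 0 ≤ t → Λ t ∈ K)
    (hΛ0 : Λ 0 = 0)
    (hΛstrict : ∀ t τ : ℝ, 0 ≤ t → t < τ → Λ τ - Λ t ∈ K \ (-H))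
    (hΛsub : ∀ t₁ t₂ : ℝ, 0 ≤ t₁ → 0 ≤ t₂ → (Λ t₁ + Λ t₂) - Λ (t₁ + t₂) ∈ K)
    {X : Type*} [MetricSpace X]
    (A : Set (X × Y)) (hA : A.Nonempty)
    (hbdd : ∃ ytilde : Y, ∀ p ∈ A, p.2 - ytilde ∈ H)
    (harch : ∀ h v : Y, h ∈ H → v ∈ H → (∀ τ : ℝ, 0 < τ → v - τ • h ∈ H) →
      h ∈ H ∩ (-H))
    (x : ℕ → X) (y : ℕ → Y)
    (hxyA : ∀ n : ℕ, (x n, y n) ∈ A)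
    (hasc : ∀ n m : ℕ, n ≤ m → y n - y m - Λ (dist (x n) (x m)) ∈ K) :
    CauchySeq x :=
  ascending_sequence_is_cauchy_general K H hKcone hHcone hKH Λ hΛmem hΛ0 hΛstrict A hbdd harch x y
    hxyA hasc
end

section
/- Main result, Archimedean case (Theorem 4.1): Let Y be a real vector space, K ⊆ Y a convex cone, H ⊆ Y a convex cone with K ⊆ H, Λ : [0,∞) → K almost normal modulo (K,H), and (X,d) a metric space. Define the quasi-order ⪰ on X × Y by (x₁,y₁) ⪰ (x₂,y₂) iff Λ(d(x₁,x₂)) ≤_K y₁ − y₂, and the semimetric e on X × Y by e((x₁,y₁),(x₂,y₂)) = d(x₁,x₂). Let A ⊆ X × Y be nonempty and assume: (i) P_Y(A) is bounded below modulo H (there exists ỹ ∈ Y with y − ỹ ∈ H for all (x,y) ∈ A); (ii) H is Archimedean (h, v ∈ H and τh ≤_H v for all τ > 0 imply h ∈ H ∩ (−H)); (iii) every ⪰-ascending e-Cauchy sequence in A is bounded above in A modulo ⪰. Then for each (x₀,y₀) ∈ A there exists (x̄,ȳ) ∈ A such that (x₀,y₀) ⪰ (x̄,ȳ) (hence y₀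 ≥_K ȳ), and for every (x′,y′) ∈ A with (x̄,ȳ) ⪰ (x′,y′) one has x̄ = x′. -/
/-- The product quasi-order on `X × Y`:
`(x₁,y₁) ⪰ (x₂,y₂)` iff `Λ(d(x₁,x₂)) ≤_K y₁ − y₂`. -/
def prodSucc {Y : Type*} [AddCommGroup Y] [Module ℝ Y]
    (K : Set Y) (Λ : ℝ → Y) {X : Type*} [MetricSpace X]
    (p q : X × Y) : Prop :=
  p.2 - q.2 - Λ (dist p.1 q.1) ∈ K

/-!
Along a `⪰`-ascending sequence in `A`, every step whose `X`-distance exceeds `δ` lowers the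
`Y`-coordinate by at least `Λ δ` modulo `K`. Infinitely many such steps would give
`ỹ + n Λ(δ) ≤_H y₀` for every `n`, and the Archimedean property would force `Λ δ ∈ -H`, which
almost normality forbids; so ascending sequences in `A` are `e`-Cauchy. Starting from `(x₀,y₀)`,
choose each next point at (truncated) distance at least half the supremum of the distances to all
its successors in `A`. An upper bound in `A` of this Cauchy sequence, given by (iii), is a limit of
its `X`-coordinates, and so is every successor of that bound: they all have the same `x`.
-/

open Filter Topology

theorem exists_forall_le_two_mul {ι : Type*} {s : Set ι} (hs : s.Nonempty) {f : ι → ℝ}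
    (hf : ∀ i ∈ s, 0 ≤ f i) (hbdd : BddAbove (f '' s)) :
    ∃ j ∈ s, ∀ i ∈ s, f i ≤ 2 * f j := by
  have hle (i : ι) (hi : i ∈ s) : f i ≤ sSup (f '' s) := le_csSup hbdd ⟨i, hi, rfl⟩
  by_cases hhalf : ∃ j ∈ s, sSup (f '' s) / 2 < f j
  · obtain ⟨j, hj, hlt⟩ := hhalf
    exact ⟨j, hj, fun i hi => by linarith [hle i hi]⟩
  · push Not at hhalf
    have : sSup (f '' s) ≤ sSup (f '' s) / 2 :=
      csSup_le (hs.image f) (by rintro _ ⟨i, hi, rfl⟩; exact hhalf i hi)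
    obtain ⟨j, hj⟩ := hs
    exact ⟨j, hj, fun i hi => by linarith [hle i hi, hf j hj]⟩

theorem tendsto_of_min_dist_le_two_mul {X : Type*} [PseudoMetricSpace X] {u : ℕ → X} {x : X}
    (hu : Tendsto (fun n => dist (u n) (u (n + 1))) atTop (𝓝 0))
    (h : ∀ n, min (dist (u n) x) 1 ≤ 2 * min (dist (u n) (u (n + 1))) 1) :
    Tendsto u atTop (𝓝 x) := by
  have hmin : Tendsto (fun n => min (dist (u n) x) 1) atTop (𝓝 0) :=
    squeeze_zero (fun _ => le_min dist_nonneg zero_le_one)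
      (fun n => (h n).trans (mul_le_mul_of_nonneg_left (min_le_left _ _) zero_le_two))
      (by simpa using hu.const_mul 2)
  have heq : ∀ᶠ n in atTop, min (dist (u n) x) 1 = dist (u n) x := by
    filter_upwards [hmin.eventually (gt_mem_nhds zero_lt_one)] with n hn
    exact min_eq_left ((min_lt_iff.1 hn).resolve_right (lt_irrefl 1)).le
  exact tendsto_iff_dist_tendsto_zero.2 (hmin.congr' heq)

theorem tendsto_dist_succ_of_cauchy {X : Type*} [PseudoMetricSpace X] {u : ℕ → X}
    (hu : ∀ δ : ℝ, 0 < δ → ∃ N : ℕ, ∀ p q : ℕ, N ≤ p → p ≤ q → dist (u p) (u q) ≤ δ) :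
    Tendsto (fun n => dist (u n) (u (n + 1))) atTop (𝓝 0) := by
  refine Metric.tendsto_atTop.2 fun ε hε => ?_
  obtain ⟨N, hN⟩ := hu (ε / 2) (half_pos hε)
  refine ⟨N, fun n hn => ?_⟩
  rw [Real.dist_eq, sub_zero, abs_of_nonneg dist_nonneg]
  linarith [hN n (n + 1) hn n.le_succ]

def IsConeSet {Y : Type*} [AddCommGroup Y] [Module ℝ Y] (K : Set Y) : Prop :=
  ∀ a b : ℝ, 0 ≤ a → 0 ≤ b → ∀ x ∈ K, ∀ y ∈ K, a • x + b • y ∈ K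

structure IsAlmostNormal {Y : Type*} [AddCommGroup Y] [Module ℝ Y]
    (K H : Set Y) (Λ : ℝ → Y) : Prop where
  mem : ∀ t : ℝ, 0 ≤ t → Λ t ∈ K
  map_zero : Λ 0 = 0
  sub_mem_diff : ∀ t τ : ℝ, 0 ≤ t → t < τ → Λ τ - Λ t ∈ K \ (-H)
  add_sub_mem : ∀ t₁ t₂ : ℝ, 0 ≤ t₁ → 0 ≤ t₂ → (Λ t₁ + Λ t₂) - Λ (t₁ + t₂) ∈ K

section MaximalPrinciple

variable {Y : Type*} [AddCommGroup Y] [Module ℝ Y] {K H : Set Y} {Λ : ℝ → Y}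

theorem IsConeSet.add_mem (hK : IsConeSet K) {x y : Y} (hx : x ∈ K) (hy : y ∈ K) :
    x + y ∈ K := by
  simpa using hK 1 1 zero_le_one zero_le_one x hx y hy

namespace IsAlmostNormal

theorem zero_mem (hΛ : IsAlmostNormal K H Λ) : (0 : Y) ∈ K :=
  hΛ.map_zero ▸ hΛ.mem 0 le_rfl

theorem sub_mem_of_le (hΛ : IsAlmostNormal K H Λ) {t τ : ℝ} (ht : 0 ≤ t) (htτ : t ≤ τ) :
    Λ τ - Λ t ∈ K := by
  rcases htτ.eq_or_lt with rfl | hlt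
  · simpa using hΛ.zero_mem
  · exact (hΛ.sub_mem_diff t τ ht hlt).1

theorem notMem_neg (hΛ : IsAlmostNormal K H Λ) {δ : ℝ} (hδ : 0 < δ) : Λ δ ∉ -H := by
  simpa [hΛ.map_zero] using (hΛ.sub_mem_diff 0 δ le_rfl hδ).2

end IsAlmostNormal

theorem neg_mem_of_forall_sub_natCast_smul_mem (hH : IsConeSet H)
    (harch : ∀ h v : Y, h ∈ H → v ∈ H → (∀ τ : ℝ, 0 < τ → v - τ • h ∈ H) → h ∈ H ∩ (-H))
    {h v : Y} (hh : h ∈ H) (hv : v ∈ H) (hn : ∀ n : ℕ, v - (n : ℝ) • h ∈ H) : h ∈ -H := by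
  refine (harch h v hh hv fun τ _ => ?_).2
  obtain ⟨n, hn'⟩ := exists_nat_ge τ
  have := hH 1 (n - τ) zero_le_one (sub_nonneg.2 hn') _ (hn n) _ hh
  convert this using 1
  rw [one_smul, sub_smul]
  abel

section prodSucc

variable {X : Type*} [MetricSpace X]

theorem prodSucc_refl (hΛ : IsAlmostNormal K H Λ) (p : X × Y) : prodSucc K Λ p p := by
  simpa [prodSucc, hΛ.map_zero] using hΛ.zero_mem

theorem prodSucc_trans (hK : IsConeSet K) (hΛ : IsAlmostNormal K H Λ) {p q r : X × Y}
    (hpq : prodSucc K Λ p q) (hqr : prodSucc K Λ q r) : prodSucc K Λ p r := by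
  have hsub := hΛ.add_sub_mem _ _ (dist_nonneg (x := p.1) (y := q.1))
    (dist_nonneg (x := q.1) (y := r.1))
  have hmono := hΛ.sub_mem_of_le dist_nonneg (dist_triangle p.1 q.1 r.1)
  have := hK.add_mem (hK.add_mem (hK.add_mem hpq hqr) hsub) hmono
  unfold prodSucc
  convert this using 1
  abel

theorem sub_mem_of_prodSucc (hK : IsConeSet K) (hΛ : IsAlmostNormal K H Λ) {p q : X × Y}
    (h : prodSucc K Λ p q) : p.2 - q.2 ∈ K := by
  simpa using hK.add_mem h (hΛ.mem (dist p.1 q.1) dist_nonneg)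

theorem exists_sub_smul_mem_of_frequently_dist_gt (hK : IsConeSet K)
    (hΛ : IsAlmostNormal K H Λ) {a : ℕ → X × Y}
    (hasc : ∀ n m : ℕ, n ≤ m → prodSucc K Λ (a n) (a m)) {δ : ℝ} (hδ : 0 ≤ δ)
    (hfar : ∀ N : ℕ, ∃ p q : ℕ, N ≤ p ∧ p ≤ q ∧ δ < dist (a p).1 (a q).1) (k : ℕ) :
    ∃ m, (a 0).2 - (a m).2 - (k : ℝ) • Λ δ ∈ K := by
  induction k with
  | zero => exact ⟨0, by simpa using hΛ.zero_mem⟩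
  | succ k ih =>
    obtain ⟨m, hm⟩ := ih
    obtain ⟨p, q, hmp, hpq, hdist⟩ := hfar m
    refine ⟨q, ?_⟩
    have hstep := hK.add_mem (hasc p q hpq) (hΛ.sub_mem_of_le hδ hdist.le)
    have := hK.add_mem (hK.add_mem hm (sub_mem_of_prodSucc hK hΛ (hasc m p hmp))) hstep
    convert this using 1
    push_cast
    rw [add_smul, one_smul]
    abel

theorem exists_dist_le_of_prodSucc_ascending (hK : IsConeSet K) (hH : IsConeSet H) (hKH : K ⊆ H)
    (hΛ : IsAlmostNormal K H Λ)
    (harch : ∀ h v : Y, h ∈ H → v ∈ H → (∀ τ : ℝ, 0 < τ → v - τ • h ∈ H) → h ∈ H ∩ (-H))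
    {a : ℕ → X × Y} {ytilde : Y} (hbdd : ∀ n, (a n).2 - ytilde ∈ H)
    (hasc : ∀ n m : ℕ, n ≤ m → prodSucc K Λ (a n) (a m)) :
    ∀ δ : ℝ, 0 < δ → ∃ N : ℕ, ∀ p q : ℕ, N ≤ p → p ≤ q → dist (a p).1 (a q).1 ≤ δ := by
  by_contra! ⟨δ, hδ, hfar⟩
  have hsmul (k : ℕ) : (a 0).2 - ytilde - (k : ℝ) • Λ δ ∈ H := by
    obtain ⟨m, hm⟩ := exists_sub_smul_mem_of_frequently_dist_gt hK hΛ hasc hδ.le hfar k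
    convert hH.add_mem (hKH hm) (hbdd m) using 1
    abel
  exact hΛ.notMem_neg hδ <| neg_mem_of_forall_sub_natCast_smul_mem hH harch
    (hKH (hΛ.mem δ hδ.le)) (hbdd 0) hsmul

theorem prodSucc_iterate (hK : IsConeSet K) (hΛ : IsAlmostNormal K H Λ) {A : Set (X × Y)}
    {g : X × Y → X × Y} (hgA : ∀ p ∈ A, g p ∈ A) (hg : ∀ p ∈ A, prodSucc K Λ p (g p))
    {p : X × Y} (hp : p ∈ A) :
    (∀ n, g^[n] p ∈ A) ∧ ∀ n m : ℕ, n ≤ m → prodSucc K Λ (g^[n] p) (g^[m] p) := by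
  have hA (n : ℕ) : g^[n] p ∈ A := by
    induction n with
    | zero => exact hp
    | succ n ih => simpa [Function.iterate_succ_apply'] using hgA _ ih
  refine ⟨hA, fun n m hnm => ?_⟩
  induction m, hnm using Nat.le_induction with
  | base => exact prodSucc_refl hΛ _
  | succ m _ ih =>
    rw [Function.iterate_succ_apply']
    exact prodSucc_trans hK hΛ ih (hg _ (hA m))

-- Truncating at `1` keeps the supremum finite when `X` is unbounded.
theorem exists_prodSucc_forall_min_dist_le (hΛ : IsAlmostNormal K H Λ) {A : Set (X × Y)}
    {p : X × Y} (hp : p ∈ A) :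
    ∃ p' ∈ A, prodSucc K Λ p p' ∧
      ∀ r ∈ A, prodSucc K Λ p r → min (dist p.1 r.1) 1 ≤ 2 * min (dist p.1 p'.1) 1 := by
  obtain ⟨q, ⟨hqA, hpq⟩, hmax⟩ := exists_forall_le_two_mul (s := {r | r ∈ A ∧ prodSucc K Λ p r})
    (f := fun r => min (dist p.1 r.1) 1) ⟨p, hp, prodSucc_refl hΛ p⟩
    (fun _ _ => le_min dist_nonneg zero_le_one)
    ⟨1, by rintro _ ⟨r, -, rfl⟩; exact min_le_right _ _⟩
  exact ⟨q, hqA, hpq, fun r hr hpr => hmax r ⟨hr, hpr⟩⟩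

end prodSucc

end MaximalPrinciple

theorem vector_maximal_principle_archimedean_general
    {Y : Type*} [AddCommGroup Y] [Module ℝ Y]
    (K H : Set Y)
    (hKcone : ∀ a b : ℝ, 0 ≤ a → 0 ≤ b → ∀ x ∈ K, ∀ y ∈ K, a • x + b • y ∈ K)
    (hHcone : ∀ a b : ℝ, 0 ≤ a → 0 ≤ b → ∀ x ∈ H, ∀ y ∈ H, a • x + b • y ∈ H)
    (hKH : K ⊆ H)
    (Λ : ℝ → Y) (hΛmem : ∀ t : ℝ, 0 ≤ t → Λ t ∈ K)
    (hΛ0 : Λ 0 = 0)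
    (hΛstrict : ∀ t τ : ℝ, 0 ≤ t → t < τ → Λ τ - Λ t ∈ K \ (-H))
    (hΛsub : ∀ t₁ t₂ : ℝ, 0 ≤ t₁ → 0 ≤ t₂ → (Λ t₁ + Λ t₂) - Λ (t₁ + t₂) ∈ K)
    {X : Type*} [MetricSpace X]
    (A : Set (X × Y))
    (hbdd : ∃ ytilde : Y, ∀ p ∈ A, p.2 - ytilde ∈ H)
    (harch : ∀ h v : Y, h ∈ H → v ∈ H → (∀ τ : ℝ, 0 < τ → v - τ • h ∈ H) →
      h ∈ H ∩ (-H))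
    (hind : ∀ a : ℕ → X × Y, (∀ n : ℕ, a n ∈ A) →
      (∀ n m : ℕ, n ≤ m → prodSucc K Λ (a n) (a m)) →
      (∀ δ : ℝ, 0 < δ → ∃ N : ℕ, ∀ p q : ℕ, N ≤ p → p ≤ q →
        dist (a p).1 (a q).1 ≤ δ) →
      ∃ b ∈ A, ∀ n : ℕ, prodSucc K Λ (a n) b) :
    ∀ p ∈ A, ∃ q ∈ A, prodSucc K Λ p q ∧ p.2 - q.2 ∈ K ∧
      ∀ r ∈ A, prodSucc K Λ q r → q.1 = r.1 := by
  have hΛ : IsAlmostNormal K H Λ := ⟨hΛmem, hΛ0, hΛstrict, hΛsub⟩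
  obtain ⟨ytilde, hytilde⟩ := hbdd
  intro p₀ hp₀
  choose! g hgA hg hgmax using fun p (hp : p ∈ A) => exists_prodSucc_forall_min_dist_le hΛ hp
  obtain ⟨haA, hasc⟩ := prodSucc_iterate hKcone hΛ hgA hg hp₀
  set a : ℕ → X × Y := fun n => g^[n] p₀
  have hcauchy := exists_dist_le_of_prodSucc_ascending hKcone hHcone hKH hΛ harch
    (fun n => hytilde _ (haA n)) hasc
  obtain ⟨b, hbA, hb⟩ := hind a haA hasc hcauchy
  have hlim {s : X × Y} (hs : s ∈ A) (hbelow : ∀ n, prodSucc K Λ (a n) s) :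
      Tendsto (fun n => (a n).1) atTop (𝓝 s.1) := by
    refine tendsto_of_min_dist_le_two_mul (tendsto_dist_succ_of_cauchy hcauchy) fun n => ?_
    simpa [a, Function.iterate_succ_apply'] using hgmax _ (haA n) s hs (hbelow n)
  refine ⟨b, hbA, hb 0, sub_mem_of_prodSucc hKcone hΛ (hb 0), fun r hr hbr => ?_⟩
  exact tendsto_nhds_unique (hlim hbA hb) (hlim hr fun n => prodSucc_trans hKcone hΛ (hb n) hbr)

/-- Main result, Archimedean case (Theorem 4.1). -/
theorem vector_maximal_principle_archimedean
    {Y : Type*} [AddCommGroup Y] [Module ℝ Y]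
    (K H : Set Y)
    (hKcone : ∀ a b : ℝ, 0 ≤ a → 0 ≤ b → ∀ x ∈ K, ∀ y ∈ K, a • x + b • y ∈ K)
    (hHcone : ∀ a b : ℝ, 0 ≤ a → 0 ≤ b → ∀ x ∈ H, ∀ y ∈ H, a • x + b • y ∈ H)
    (hKH : K ⊆ H)
    (Λ : ℝ → Y) (hΛmem : ∀ t : ℝ, 0 ≤ t → Λ t ∈ K)
    (hΛ0 : Λ 0 = 0)
    (hΛstrict : ∀ t τ : ℝ, 0 ≤ t → t < τ → Λ τ - Λ t ∈ K \ (-H))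
    (hΛsub : ∀ t₁ t₂ : ℝ, 0 ≤ t₁ → 0 ≤ t₂ → (Λ t₁ + Λ t₂) - Λ (t₁ + t₂) ∈ K)
    {X : Type*} [MetricSpace X]
    (A : Set (X × Y)) (hA : A.Nonempty)
    (hbdd : ∃ ytilde : Y, ∀ p ∈ A, p.2 - ytilde ∈ H)
    (harch : ∀ h v : Y, h ∈ H → v ∈ H → (∀ τ : ℝ, 0 < τ → v - τ • h ∈ H) →
      h ∈ H ∩ (-H))
    (hind : ∀ a : ℕ → X × Y, (∀ n : ℕ, a n ∈ A) →
      (∀ n m : ℕ, n ≤ m → prodSucc K Λ (a n) (a m)) →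
      (∀ δ : ℝ, 0 < δ → ∃ N : ℕ, ∀ p q : ℕ, N ≤ p → p ≤ q →
        dist (a p).1 (a q).1 ≤ δ) →
      ∃ b ∈ A, ∀ n : ℕ, prodSucc K Λ (a n) b) :
    ∀ p ∈ A, ∃ q ∈ A, prodSucc K Λ p q ∧ p.2 - q.2 ∈ K ∧
      ∀ r ∈ A, prodSucc K Λ q r → q.1 = r.1 :=
  vector_maximal_principle_archimedean_general K H hKcone hHcone hKH Λ hΛmem hΛ0 hΛstrict hΛsub A
    hbdd harch hind
end

section
/- Goepfert–Tammer–Zălinescu maximal principle (Theorem 1.1): Let Y be a real separated locally convex topological vector space, K ⊆ Y a convex cone, and k⁰ ∈ K \ (−cl(K)) where cl(K) is the topological closure of K. Let (X,d) be a complete metric space, and define the quasi-order ⪰ on X × Y by (x₁,y₁) ⪰ (x₂,y₂) iff k⁰·d(x₁,x₂) ≤_K y₁ − y₂ (i.e. y₁ − y₂ − d(x₁,x₂)·k⁰ ∈ K). Let A ⊆ X × Y be nonempty and assume: (i) P_Y(A) is bounded below modulo K: there exists ỹ ∈ Y with y − ỹ ∈ K for all (x,y) ∈ A; (ii) if ((x_n,y_n))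 ⊆ A is ⪰-ascending and x_n → x in X, then x ∈ P_X(A) and there exists y with (x,y) ∈ A such that (x_n,y_n) ⪰ (x,y) for all n. Then for each (x₀,y₀) ∈ A there exists (x̄,ȳ) ∈ A such that (x₀,y₀) ⪰ (x̄,ȳ) (hence y₀ ≥_K ȳ), and for every (x′,y′) ∈ A with (x̄,ȳ) ⪰ (x′,y′) one has x̄ = x′. -/
/-- The product quasi-order on `X × Y` attached to `k⁰`:
`(x₁,y₁) ⪰ (x₂,y₂)` iff `k⁰·d(x₁,x₂) ≤_K y₁ − y₂`. -/
def prodSuccLin {Y : Type*} [AddCommGroup Y] [Module ℝ Y]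
    (K : Set Y) (k0 : Y) {X : Type*} [MetricSpace X]
    (p q : X × Y) : Prop :=
  p.2 - q.2 - dist p.1 q.1 • k0 ∈ K

/-!
Hahn–Banach separates `-k⁰` from `cl K`, giving a continuous linear functional `f ≥ 0` on `K`
with `f k⁰ > 0`. Then `(x₁,y₁) ⪰ (x₂,y₂)` forces `d(x₁,x₂) ≤ φ(x₁,y₁) - φ(x₂,y₂)` for
`φ(x,y) = f y / f k⁰`, which is bounded below on `A`, and a Brezis–Browder argument applies:
choose an ascending sequence each of whose terms nearly minimises `φ` among the successors of
the previous term. Its first coordinates are Cauchy, and an upper bound `q` supplied by the limit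
condition can only have successors at distance `0` from it.
-/

open Filter Topology

section LyapunovQuasiOrder

variable {P X : Type*} [MetricSpace X] {R : P → P → Prop} {π : P → X} {φ : P → ℝ} {A : Set P}

theorem exists_rel_forall_rel_lt_add (hrefl : ∀ p, R p p) (hφ : BddBelow (φ '' A))
    {p : P} (hp : p ∈ A) {ε : ℝ} (hε : 0 < ε) :
    ∃ q ∈ A, R p q ∧ ∀ r ∈ A, R p r → φ q < φ r + ε := by
  set S := φ '' {q | q ∈ A ∧ R p q}
  have hS : S.Nonempty := ⟨φ p, p, ⟨hp, hrefl p⟩, rfl⟩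
  obtain ⟨_, ⟨q, hq, rfl⟩, hlt⟩ := Real.lt_sInf_add_pos hS hε
  refine ⟨q, hq.1, hq.2, fun r hr hpr => hlt.trans_le ?_⟩
  have hSbdd : BddBelow S := hφ.mono (Set.image_mono fun _ h => h.1)
  gcongr
  exact csInf_le hSbdd ⟨r, ⟨hr, hpr⟩, rfl⟩

theorem exists_seq_rel_succ_forall_rel_lt_add (hrefl : ∀ p, R p p) (hφ : BddBelow (φ '' A))
    {p : P} (hp : p ∈ A) {ε : ℕ → ℝ} (hε : ∀ n, 0 < ε n) :
    ∃ a : ℕ → P, a 0 = p ∧ ∀ n, a n ∈ A ∧ R (a n) (a (n + 1)) ∧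
      ∀ r ∈ A, R (a n) r → φ (a (n + 1)) < φ r + ε n := by
  choose next hnextA hnext using fun n (q : A) =>
    exists_rel_forall_rel_lt_add hrefl hφ q.2 (hε n)
  let b : ℕ → A := fun n =>
    Nat.rec (motive := fun _ => A) ⟨p, hp⟩ (fun n q => ⟨next n q, hnextA n q⟩) n
  exact ⟨fun n => b n, rfl, fun n => ⟨(b n).2, hnext n (b n)⟩⟩

theorem cauchySeq_of_dist_le_sub {u : ℕ → X} {g : ℕ → ℝ} (hg : BddBelow (Set.range g))
    (hdist : ∀ i j, i ≤ j → dist (u i) (u j) ≤ g i - g j) : CauchySeq u := by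
  have hanti : Antitone g := fun i j hij => sub_nonneg.1 (dist_nonneg.trans (hdist i j hij))
  have hlim := tendsto_atTop_ciInf hanti hg
  refine cauchySeq_of_le_tendsto_0' (fun n => g n - ⨅ i, g i) (fun n m hnm => ?_) ?_
  · exact (hdist n m hnm).trans (sub_le_sub_left (ciInf_le hg m) _)
  · simpa using hlim.sub_const (⨅ i, g i)

theorem exists_rel_forall_rel_eq_of_dist_le_sub [CompleteSpace X]
    (hrefl : ∀ p, R p p) (htrans : ∀ p q r, R p q → R q r → R p r)
    (hdist : ∀ p q, R p q → dist (π p) (π q) ≤ φ p - φ q) (hφ : BddBelow (φ '' A))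
    (hlim : ∀ a : ℕ → P, (∀ n, a n ∈ A) → (∀ n m, n ≤ m → R (a n) (a m)) →
      ∀ x, Tendsto (fun n => π (a n)) atTop (𝓝 x) → ∃ q ∈ A, ∀ n, R (a n) q)
    {p : P} (hp : p ∈ A) : ∃ q ∈ A, R p q ∧ ∀ r ∈ A, R q r → π q = π r := by
  obtain ⟨a, rfl, ha⟩ := exists_seq_rel_succ_forall_rel_lt_add hrefl hφ hp
    (ε := fun n => 1 / ((n : ℝ) + 1)) fun n => Nat.one_div_pos_of_nat
  have : Std.Refl R := ⟨hrefl⟩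
  have : IsTrans P R := ⟨htrans⟩
  have hasc : ∀ n m, n ≤ m → R (a n) (a m) :=
    fun _ _ h => Nat.rel_of_forall_rel_succ_of_le R (fun n => (ha n).2.1) h
  have hφa : BddBelow (Set.range fun n => φ (a n)) :=
    hφ.mono (Set.range_subset_iff.2 fun n => Set.mem_image_of_mem φ (ha n).1)
  obtain ⟨x, hx⟩ := cauchySeq_tendsto_of_complete <|
    cauchySeq_of_dist_le_sub hφa fun i j hij => hdist _ _ (hasc i j hij)
  obtain ⟨q, hqA, haq⟩ := hlim a (fun n => (ha n).1) hasc x hx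
  refine ⟨q, hqA, haq 0, fun r hrA hqr => dist_le_zero.1 ?_⟩
  refine le_of_tendsto_of_tendsto' tendsto_const_nhds tendsto_one_div_add_atTop_nhds_zero_nat
    fun n => ?_
  have hq_le : φ q ≤ φ (a (n + 1)) :=
    sub_nonneg.1 (dist_nonneg.trans (hdist _ _ (haq (n + 1))))
  have hnear := (ha n).2.2 r hrA (htrans _ _ _ (haq n) hqr)
  linarith [hdist q r hqr]

end LyapunovQuasiOrder

section ConeOrder

variable {Y X F : Type*} [AddCommGroup Y] [Module ℝ Y] [MetricSpace X] {C : PointedCone ℝ Y}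
  {k0 : Y} {p q r : X × Y}

theorem prodSuccLin_refl (p : X × Y) : prodSuccLin (C : Set Y) k0 p p := by
  simp [prodSuccLin]

theorem prodSuccLin_trans (hk0 : k0 ∈ C) (hpq : prodSuccLin (C : Set Y) k0 p q)
    (hqr : prodSuccLin (C : Set Y) k0 q r) : prodSuccLin (C : Set Y) k0 p r := by
  have hgap : 0 ≤ dist p.1 q.1 + dist q.1 r.1 - dist p.1 r.1 :=
    sub_nonneg.2 (dist_triangle _ _ _)
  have h := C.add_mem (C.add_mem hpq hqr) (C.smul_mem hgap hk0)
  rw [prodSuccLin, SetLike.mem_coe]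
  convert h using 1
  module

theorem sub_mem_of_prodSuccLin (hk0 : k0 ∈ C) (h : prodSuccLin (C : Set Y) k0 p q) :
    p.2 - q.2 ∈ C := by
  simpa [prodSuccLin] using C.add_mem h (C.smul_mem (dist_nonneg (x := p.1) (y := q.1)) hk0)

theorem dist_le_sub_of_prodSuccLin [FunLike F Y ℝ] [LinearMapClass F ℝ Y ℝ] {f : F}
    (hf : ∀ y ∈ C, 0 ≤ f y) (hk0 : 0 < f k0)
    (h : prodSuccLin (C : Set Y) k0 p q) : dist p.1 q.1 ≤ f p.2 / f k0 - f q.2 / f k0 := by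
  have hfh := hf _ h
  rw [map_sub, map_sub, map_smul, smul_eq_mul] at hfh
  rw [← sub_div, le_div_iff₀ hk0]
  linarith

end ConeOrder

theorem PointedCone.exists_dual_nonneg_pos {Y : Type*} [AddCommGroup Y] [Module ℝ Y]
    [TopologicalSpace Y] [IsTopologicalAddGroup Y] [ContinuousSMul ℝ Y] [LocallyConvexSpace ℝ Y]
    (C : PointedCone ℝ Y) {k : Y} (hk : k ∉ -closure (C : Set Y)) :
    ∃ f : StrongDual ℝ Y, (∀ y ∈ C, 0 ≤ f y) ∧ 0 < f k := by
  obtain ⟨f, hfC, hfk⟩ :=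
    ProperCone.hyperplane_separation_point (Submodule.closure C) (x₀ := -k) hk
  exact ⟨f, fun y hy => hfC y (subset_closure hy), by simpa using hfk⟩

theorem goepfert_tammer_zalinescu_maximal_principle_general
    {Y : Type*} [AddCommGroup Y] [Module ℝ Y] [TopologicalSpace Y]
    [IsTopologicalAddGroup Y] [ContinuousSMul ℝ Y]
    [LocallyConvexSpace ℝ Y]
    (K : Set Y)
    (hKcone : ∀ a b : ℝ, 0 ≤ a → 0 ≤ b → ∀ x ∈ K, ∀ y ∈ K, a • x + b • y ∈ K)
    (k0 : Y) (hk0 : k0 ∈ K \ (-closure K))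
    {X : Type*} [MetricSpace X] [CompleteSpace X]
    (A : Set (X × Y))
    (hbdd : ∃ ytilde : Y, ∀ p ∈ A, p.2 - ytilde ∈ K)
    (hlim : ∀ a : ℕ → X × Y, (∀ n : ℕ, a n ∈ A) →
      (∀ n m : ℕ, n ≤ m → prodSuccLin K k0 (a n) (a m)) →
      ∀ x : X, Filter.Tendsto (fun n => (a n).1) Filter.atTop (nhds x) →
        ∃ y : Y, (x, y) ∈ A ∧ ∀ n : ℕ, prodSuccLin K k0 (a n) (x, y)) :
    ∀ p ∈ A, ∃ q ∈ A, prodSuccLin K k0 p q ∧ p.2 - q.2 ∈ K ∧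
      ∀ r ∈ A, prodSuccLin K k0 q r → q.1 = r.1 := by
  intro p hp
  obtain ⟨C, rfl⟩ : ∃ C : PointedCone ℝ Y, (C : Set Y) = K :=
    ⟨.ofConeComb K ⟨k0, hk0.1⟩ fun x hx y hy a ha b hb => hKcone a b ha hb x hx y hy, rfl⟩
  obtain ⟨f, hfC, hfk⟩ := C.exists_dual_nonneg_pos hk0.2
  have hφ : BddBelow ((fun q : X × Y => f q.2 / f k0) '' A) := by
    obtain ⟨ytilde, hytilde⟩ := hbdd
    refine ⟨f ytilde / f k0, Set.forall_mem_image.2 fun q hq => ?_⟩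
    have hfq := hfC _ (hytilde q hq)
    rw [map_sub, sub_nonneg] at hfq
    exact div_le_div_of_nonneg_right hfq hfk.le
  obtain ⟨q, hqA, hpq, hq⟩ := exists_rel_forall_rel_eq_of_dist_le_sub (π := Prod.fst)
    (fun _ => prodSuccLin_refl _) (fun _ _ _ => prodSuccLin_trans hk0.1)
    (fun _ _ => dist_le_sub_of_prodSuccLin (f := f) hfC hfk) hφ
    (fun a ha hasc x hx => (hlim a ha hasc x hx).elim fun y hy => ⟨(x, y), hy⟩) hp
  exact ⟨q, hqA, hpq, sub_mem_of_prodSuccLin hk0.1 hpq, hq⟩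

/-- Goepfert–Tammer–Zălinescu maximal principle (Theorem 1.1). -/
theorem goepfert_tammer_zalinescu_maximal_principle
    {Y : Type*} [AddCommGroup Y] [Module ℝ Y] [TopologicalSpace Y]
    [IsTopologicalAddGroup Y] [ContinuousSMul ℝ Y] [T2Space Y]
    [LocallyConvexSpace ℝ Y]
    (K : Set Y)
    (hKcone : ∀ a b : ℝ, 0 ≤ a → 0 ≤ b → ∀ x ∈ K, ∀ y ∈ K, a • x + b • y ∈ K)
    (k0 : Y) (hk0 : k0 ∈ K \ (-closure K))
    {X : Type*} [MetricSpace X] [CompleteSpace X]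
    (A : Set (X × Y)) (hA : A.Nonempty)
    (hbdd : ∃ ytilde : Y, ∀ p ∈ A, p.2 - ytilde ∈ K)
    (hlim : ∀ a : ℕ → X × Y, (∀ n : ℕ, a n ∈ A) →
      (∀ n m : ℕ, n ≤ m → prodSuccLin K k0 (a n) (a m)) →
      ∀ x : X, Filter.Tendsto (fun n => (a n).1) Filter.atTop (nhds x) →
        ∃ y : Y, (x, y) ∈ A ∧ ∀ n : ℕ, prodSuccLin K k0 (a n) (x, y)) :
    ∀ p ∈ A, ∃ q ∈ A, prodSuccLin K k0 p q ∧ p.2 - q.2 ∈ K ∧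
      ∀ r ∈ A, prodSuccLin K k0 q r → q.1 = r.1 :=
  goepfert_tammer_zalinescu_maximal_principle_general K hKcone k0 hk0 A hbdd hlim
end
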